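/- Let n ≥ 1 and let W = (W₁,…,Wₙ) be the weighted left multi-shift on F²(Hₙ) associated with a weight sequence μ = {μ_β}_{|β|≥1} of strictly positive reals with sup_{α∈𝔽ₙ⁺} μ_{g_iα} < ∞ for each i. For λ = (λ₁,…,λₙ) ∈ ℂⁿ, there exists a nonzero z ∈ F²(Hₙ) with W_i^* z = λ̄_i z for all i ∈ {1,…,n} if and only if ∑_{α∈𝔽ₙ⁺} |λ_α|²/μ(α,g₀)² < ∞. In that case, the vector z_λ := ∑_{α∈𝔽ₙ⁺} (λ̄_α/μ(α,g₀)) e_α belongs to F²(Hₙ), satisfies W_i^* z_λ = λ̄_i z_λ for all i, and every joint eigenvector z of (W₁^*,…,Wₙ^*) with eigenvalue (λ̄₁,…,λ̄ₙ) is a nonzero scalar multiple of z_λ. -/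

import Mathlib

open Filter ContinuousLinearMap
open scoped ComplexConjugate

noncomputable section

attribute [local instance] Classical.decEq

abbrev Word (n : ℕ) := FreeMonoid (Fin n)

abbrev Fock (n : ℕ) := lp (fun _ : Word n => ℂ) 2

def fockE {n : ℕ} (α : Word n) : Fock n := lp.single 2 α 1

def wordOp {n : ℕ} {H : Type*} [NormedAddCommGroup H] [InnerProductSpace ℂ H]
    (T : Fin n → H →L[ℂ] H) (α : Word n) : H →L[ℂ] H :=
  ((FreeMonoid.toList α).map T).prod

def wordOfFn {n k : ℕ} (f : Fin k → Fin n) : Word n := FreeMonoid.ofList (List.ofFn f)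

def rowSum {n : ℕ} {H : Type*} [NormedAddCommGroup H] [InnerProductSpace ℂ H]
    [CompleteSpace H] (T : Fin n → H →L[ℂ] H) (k : ℕ) : H →L[ℂ] H :=
  ∑ f : Fin k → Fin n, wordOp T (wordOfFn f) * adjoint (wordOp T (wordOfFn f))

def jsr {n : ℕ} {H : Type*} [NormedAddCommGroup H] [InnerProductSpace ℂ H]
    [CompleteSpace H] (T : Fin n → H →L[ℂ] H) : ℝ :=
  limUnder atTop fun k : ℕ => ‖rowSum T k‖ ^ ((1 : ℝ) / (2 * k))

def muProd {n : ℕ} (μ : Word n → ℝ) (β α : Word n) : ℝ :=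
  ((List.range (FreeMonoid.length β)).map
    fun j => μ (FreeMonoid.ofList ((FreeMonoid.toList β).drop j) * α)).prod

def IsWeightedShift {n : ℕ} (μ : Word n → ℝ) (W : Fin n → Fock n →L[ℂ] Fock n) : Prop :=
  ∀ (i : Fin n) (α : Word n),
    W i (fockE α) = (μ (FreeMonoid.of i * α) : ℂ) • fockE (FreeMonoid.of i * α)

def BddWeights {n : ℕ} (μ : Word n → ℝ) : Prop :=
  ∀ i : Fin n, BddAbove (Set.range fun α : Word n => μ (FreeMonoid.of i * α))

def IsWeightedShiftTensor {n : ℕ} {H : Type*} [NormedAddCommGroup H] [InnerProductSpace ℂ H]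
    (μ : Word n → ℝ)
    (Wt : Fin n → lp (fun _ : Word n => H) 2 →L[ℂ] lp (fun _ : Word n => H) 2) : Prop :=
  ∀ (i : Fin n) (α : Word n) (h : H),
    Wt i (lp.single 2 α h) = (μ (FreeMonoid.of i * α) : ℂ) • lp.single 2 (FreeMonoid.of i * α) h

def polyOp {n : ℕ} {H : Type*} [NormedAddCommGroup H] [InnerProductSpace ℂ H]
    (T : Fin n → H →L[ℂ] H) (c : Word n →₀ ℂ) : H →L[ℂ] H :=
  c.sum fun α z => z • wordOp T α

def lamProd {n : ℕ} (lam : Fin n → ℂ) (α : Word n) : ℂ :=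
  ((FreeMonoid.toList α).map lam).prod

/-! The adjoint of a weighted shift acts on coordinates by `(W_i^* z)_α = μ_{g_iα} z_{g_iα}`, so the
eigenvalue equations `W_i^* z = λ̄_i z` form a recursion along words. Since all weights are
positive it forces `z_α = z_{g₀} λ̄_α / μ(α, g₀)`, and conversely every such coefficient sequence
solves the equations. Hence the joint eigenvectors are the multiples of this one sequence lying in
`ℓ²`: a nonzero one exists iff the sequence is square-summable, and then it spans them all. -/

section

variable {n : ℕ}

lemma lamProd_of_mul (lam : Fin n → ℂ) (i : Fin n) (α : Word n) :
    lamProd lam (FreeMonoid.of i * α) = lam i * lamProd lam α := by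
  simp [lamProd]

lemma muProd_of_mul (μ : Word n → ℝ) (i : Fin n) (β α : Word n) :
    muProd μ (FreeMonoid.of i * β) α = μ (FreeMonoid.of i * β * α) * muProd μ β α := by
  simp only [muProd, FreeMonoid.length_mul, FreeMonoid.length_of, add_comm 1,
    List.range_succ_eq_map, List.map_cons, List.map_map, Function.comp_def, List.prod_cons,
    FreeMonoid.toList_mul, FreeMonoid.toList_of, List.singleton_append, List.drop_zero,
    List.drop_succ_cons, FreeMonoid.ofList_cons, FreeMonoid.ofList_toList]

def eigenCoeff (μ : Word n → ℝ) (lam : Fin n → ℂ) (α : Word n) : ℂ :=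
  conj (lamProd lam α) / (muProd μ α 1 : ℂ)

lemma eigenCoeff_one (μ : Word n → ℝ) (lam : Fin n → ℂ) : eigenCoeff μ lam 1 = 1 := by
  simp [eigenCoeff, lamProd, muProd]

lemma weight_mul_eigenCoeff_of_mul {μ : Word n → ℝ}
    (hμ : ∀ β : Word n, 1 ≤ FreeMonoid.length β → 0 < μ β) (lam : Fin n → ℂ) (i : Fin n)
    (α : Word n) :
    (μ (FreeMonoid.of i * α) : ℂ) * eigenCoeff μ lam (FreeMonoid.of i * α)
      = conj (lam i) * eigenCoeff μ lam α := by
  have hμi : (μ (FreeMonoid.of i * α) : ℂ) ≠ 0 := by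
    exact_mod_cast (hμ _ (by simp)).ne'
  simp only [eigenCoeff, lamProd_of_mul, muProd_of_mul, mul_one, map_mul, Complex.ofReal_mul]
  field_simp

lemma norm_eigenCoeff_sq (μ : Word n → ℝ) (lam : Fin n → ℂ) (α : Word n) :
    ‖eigenCoeff μ lam α‖ ^ 2 = ‖lamProd lam α‖ ^ 2 / muProd μ α 1 ^ 2 := by
  rw [eigenCoeff, norm_div, Complex.norm_conj, Complex.norm_real, Real.norm_eq_abs, div_pow, sq_abs]

lemma memℓp_eigenCoeff_iff (μ : Word n → ℝ) (lam : Fin n → ℂ) :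
    Memℓp (eigenCoeff μ lam) 2 ↔
      Summable (fun α : Word n => ‖lamProd lam α‖ ^ 2 / muProd μ α 1 ^ 2) := by
  simp [memℓp_gen_iff, ← norm_eigenCoeff_sq]

open scoped InnerProductSpace in
lemma inner_fockE (α : Word n) (x : Fock n) : ⟪fockE α, x⟫_ℂ = x α := by
  simp [fockE, lp.inner_single_left]

lemma IsWeightedShift.adjoint_apply {μ : Word n → ℝ} {W : Fin n → Fock n →L[ℂ] Fock n}
    (hW : IsWeightedShift μ W) (i : Fin n) (z : Fock n) (α : Word n) :
    adjoint (W i) z α = μ (FreeMonoid.of i * α) * z (FreeMonoid.of i * α) := by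
  rw [← inner_fockE, adjoint_inner_right, hW i α, inner_smul_left, inner_fockE,
    Complex.conj_ofReal]

lemma IsWeightedShift.adjoint_eq_smul_iff {μ : Word n → ℝ} {W : Fin n → Fock n →L[ℂ] Fock n}
    (hW : IsWeightedShift μ W) (i : Fin n) (c : ℂ) (z : Fock n) :
    adjoint (W i) z = c • z ↔
      ∀ α, μ (FreeMonoid.of i * α) * z (FreeMonoid.of i * α) = c * z α := by
  simp [lp.ext_iff, funext_iff, hW.adjoint_apply]

theorem IsWeightedShift.forall_adjoint_eq_conj_smul_iff {μ : Word n → ℝ}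
    (hμ : ∀ β : Word n, 1 ≤ FreeMonoid.length β → 0 < μ β)
    {W : Fin n → Fock n →L[ℂ] Fock n} (hW : IsWeightedShift μ W) (lam : Fin n → ℂ)
    (z : Fock n) :
    (∀ i, adjoint (W i) z = conj (lam i) • z) ↔ ⇑z = z 1 • eigenCoeff μ lam := by
  simp only [hW.adjoint_eq_smul_iff]
  constructor
  · intro hz
    funext α
    induction α using FreeMonoid.inductionOn' with
    | one => simp [eigenCoeff_one]
    | of_mul i β ih =>
      have hμi : (μ (FreeMonoid.of i * β) : ℂ) ≠ 0 := by
        exact_mod_cast (hμ _ (by simp)).ne'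
      apply mul_left_cancel₀ hμi
      rw [hz i β, ih]
      simp only [Pi.smul_apply, smul_eq_mul]
      linear_combination -z 1 * weight_mul_eigenCoeff_of_mul hμ lam i β
  · intro hz i α
    rw [hz]
    simp only [Pi.smul_apply, smul_eq_mul]
    linear_combination z 1 * weight_mul_eigenCoeff_of_mul hμ lam i α

end

theorem stmt_18_general (n : ℕ) (μ : Word n → ℝ)
    (hμ : ∀ β : Word n, 1 ≤ FreeMonoid.length β → 0 < μ β)
    (W : Fin n → Fock n →L[ℂ] Fock n) (hW : IsWeightedShift μ W)
    (lam : Fin n → ℂ) :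
    ((∃ z : Fock n, z ≠ 0 ∧ ∀ i : Fin n,
        adjoint (W i) z = (starRingEnd ℂ) (lam i) • z) ↔
      Summable (fun α : Word n => ‖lamProd lam α‖ ^ 2 / (muProd μ α 1) ^ 2)) ∧
    (Summable (fun α : Word n => ‖lamProd lam α‖ ^ 2 / (muProd μ α 1) ^ 2) →
      ∃ zl : Fock n,
        (∀ α : Word n, (zl : ∀ _ : Word n, ℂ) α =
          (starRingEnd ℂ) (lamProd lam α) / (muProd μ α 1 : ℂ)) ∧
        zl ≠ 0 ∧
        (∀ i : Fin n, adjoint (W i) zl = (starRingEnd ℂ) (lam i) • zl) ∧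
        ∀ z : Fock n, z ≠ 0 →
          (∀ i : Fin n, adjoint (W i) z = (starRingEnd ℂ) (lam i) • z) →
          ∃ c : ℂ, c ≠ 0 ∧ z = c • zl) := by
  have heigen := hW.forall_adjoint_eq_conj_smul_iff hμ lam
  have hvacuum : ∀ z : Fock n, z ≠ 0 → (∀ i, adjoint (W i) z = conj (lam i) • z) → z 1 ≠ 0 := by
    intro z hz0 hz hz1
    exact hz0 (lp.ext (by rw [(heigen z).1 hz, hz1, zero_smul]; rfl))
  have hexists : Summable (fun α : Word n => ‖lamProd lam α‖ ^ 2 / (muProd μ α 1) ^ 2) →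
      ∃ zl : Fock n, (∀ α, zl α = conj (lamProd lam α) / (muProd μ α 1 : ℂ)) ∧ zl ≠ 0 ∧
        (∀ i, adjoint (W i) zl = conj (lam i) • zl) ∧
        ∀ z : Fock n, z ≠ 0 → (∀ i, adjoint (W i) z = conj (lam i) • z) →
          ∃ c : ℂ, c ≠ 0 ∧ z = c • zl := by
    intro hs
    let zl : Fock n := ⟨eigenCoeff μ lam, (memℓp_eigenCoeff_iff μ lam).2 hs⟩
    have hzl1 : zl 1 = 1 := eigenCoeff_one μ lam
    refine ⟨zl, fun α => rfl, fun h => by simp [h] at hzl1,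
      (heigen zl).2 (by rw [hzl1, one_smul]), ?_⟩
    exact fun z hz0 hz => ⟨z 1, hvacuum z hz0 hz, lp.ext ((heigen z).1 hz)⟩
  refine ⟨⟨fun ⟨z, hz0, hz⟩ => ?_, fun hs => ?_⟩, hexists⟩
  · have hcoeff : eigenCoeff μ lam = (z 1)⁻¹ • ⇑z :=
      (eq_inv_smul_iff₀ (hvacuum z hz0 hz)).2 ((heigen z).1 hz).symm
    exact (memℓp_eigenCoeff_iff μ lam).1 (hcoeff ▸ (lp.memℓp z).const_smul _)
  · obtain ⟨zl, -, hzl0, hzl, -⟩ := hexists hs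
    exact ⟨zl, hzl0, hzl⟩

theorem stmt_18 (n : ℕ) (hn : 1 ≤ n) (μ : Word n → ℝ)
    (hμ : ∀ β : Word n, 1 ≤ FreeMonoid.length β → 0 < μ β)
    (hbdd : BddWeights μ)
    (W : Fin n → Fock n →L[ℂ] Fock n) (hW : IsWeightedShift μ W)
    (lam : Fin n → ℂ) :
    ((∃ z : Fock n, z ≠ 0 ∧ ∀ i : Fin n,
        adjoint (W i) z = (starRingEnd ℂ) (lam i) • z) ↔
      Summable (fun α : Word n => ‖lamProd lam α‖ ^ 2 / (muProd μ α 1) ^ 2)) ∧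
    (Summable (fun α : Word n => ‖lamProd lam α‖ ^ 2 / (muProd μ α 1) ^ 2) →
      ∃ zl : Fock n,
        (∀ α : Word n, (zl : ∀ _ : Word n, ℂ) α =
          (starRingEnd ℂ) (lamProd lam α) / (muProd μ α 1 : ℂ)) ∧
        zl ≠ 0 ∧
        (∀ i : Fin n, adjoint (W i) zl = (starRingEnd ℂ) (lam i) • zl) ∧
        ∀ z : Fock n, z ≠ 0 →
          (∀ i : Fin n, adjoint (W i) z = (starRingEnd ℂ) (lam i) • z) →
          ∃ c : ℂ, c ≠ 0 ∧ z = c • zl) :=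
  stmt_18_general n μ hμ W hW lam

end
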